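/- For the function U(t,z) = r^{1/2}cos(θ/2), there is a universal constant C such that |U_{tt}(t,z)| ≤ C r^{-1} U_t(t,z) for all (t,z) ∉ {(t,0) : t ≤ 0}, where r = √(t²+z²). Consequently, if |μ| ≤ r/2 then |U(t+μ, z) - U(t,z) - μ U_t(t,z)| ≤ C' μ² r^{-1} U_t(t,z), and hence (1 + μ/(2r) - C'μ²/r²) U(t,z) ≤ U(t+μ,z) ≤ (1 + μ/(2r) + C'μ²/r²) U(t,z). -/

import Mathlib

open Real

/-- The function `U(t,z) = r^{1/2} cos(θ/2)`. -/
noncomputable def U (p : ℝ × ℝ) : ℝ :=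
  Real.sqrt (Real.sqrt (p.1 ^ 2 + p.2 ^ 2)) *
    Real.cos (Complex.arg (p.1 + p.2 * Complex.I) / 2)

/-- `U_t = ∂U/∂t`. -/
noncomputable def Ut (p : ℝ × ℝ) : ℝ := deriv (fun t => U (t, p.2)) p.1

/-- `U_{tt} = ∂²U/∂t²`. -/
noncomputable def Utt (p : ℝ × ℝ) : ℝ := deriv (fun t => Ut (t, p.2)) p.1

/-- The negative half-line `P⁻ = {(t,0) : t ≤ 0}`. -/
def Pneg : Set (ℝ × ℝ) := {p | p.1 ≤ 0 ∧ p.2 = 0}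

/-- `r = √(t² + z²)`. -/
noncomputable def rad (p : ℝ × ℝ) : ℝ := Real.sqrt (p.1 ^ 2 + p.2 ^ 2)

/-! Off the slit `P⁻` the half-angle formula gives `U = √((r + t) / 2)`, hence `U_t = U / (2r)`
and `U_tt = U (r - 2t) / (4r³)`; as `|r - 2t| ≤ 3r`, this is the first estimate. Read as a bound
`|(log U_t)_t| ≤ 3/r` on the segment `|s - t| ≤ r/2`, where `r(s, z) ≥ r/2`, it shows that `U_t`
grows by at most the factor `e^{3/2}` there. Hence `|U_tt| ≤ 3 e^{3/2} r⁻¹ U_t(t, z)` on the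
segment, which gives the second-order Taylor estimate; the two-sided bound is that estimate
rewritten with `U_t = U / (2r)`. -/

open Set

lemma le_exp_mul_of_abs_deriv_le {g g' : ℝ → ℝ} {a b K : ℝ}
    (hpos : ∀ x ∈ uIcc a b, 0 < g x) (hg : ∀ x ∈ uIcc a b, HasDerivAt g (g' x) x)
    (hK : ∀ x ∈ uIcc a b, |g' x| ≤ K * g x) :
    g b ≤ exp (K * |b - a|) * g a := by
  have hlog : |log (g b) - log (g a)| ≤ K * |b - a| :=
    (convex_uIcc a b).norm_image_sub_le_of_norm_hasDerivWithin_le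
      (fun x hx => ((hg x hx).log (hpos x hx).ne').hasDerivWithinAt)
      (fun x hx => by
        rw [norm_div, div_le_iff₀ (norm_pos_iff.mpr (hpos x hx).ne')]
        simpa [abs_of_pos (hpos x hx)] using hK x hx)
      left_mem_uIcc right_mem_uIcc
  calc g b = exp (log (g b)) := (exp_log (hpos b right_mem_uIcc)).symm
    _ ≤ exp (K * |b - a| + log (g a)) :=
        exp_le_exp.mpr (by linarith [le_abs_self (log (g b) - log (g a))])
    _ = exp (K * |b - a|) * g a := by rw [exp_add, exp_log (hpos a left_mem_uIcc)]

lemma abs_sub_sub_mul_deriv_le {f f' f'' : ℝ → ℝ} {a b M : ℝ}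
    (hf : ∀ x ∈ uIcc a b, HasDerivAt f (f' x) x) (hf' : ∀ x ∈ uIcc a b, HasDerivAt f' (f'' x) x)
    (hM : ∀ x ∈ uIcc a b, |f'' x| ≤ M) :
    |f b - f a - (b - a) * f' a| ≤ M * (b - a) ^ 2 := by
  have hlip : ∀ x ∈ uIcc a b, |f' x - f' a| ≤ M * |b - a| := fun x hx => by
    have hsub : uIcc a x ⊆ uIcc a b := uIcc_subset_uIcc_left hx
    calc |f' x - f' a| ≤ M * |x - a| :=
          (convex_uIcc a x).norm_image_sub_le_of_norm_hasDerivWithin_le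
            (fun y hy => (hf' y (hsub hy)).hasDerivWithinAt) (fun y hy => hM y (hsub hy))
            left_mem_uIcc right_mem_uIcc
      _ ≤ M * |b - a| :=
          mul_le_mul_of_nonneg_left (abs_sub_left_of_mem_uIcc hx)
            ((abs_nonneg _).trans (hM a left_mem_uIcc))
  have hmvt := (convex_uIcc a b).norm_image_sub_le_of_norm_hasDerivWithin_le
    (f := fun x => f x - x * f' a)
    (fun x hx => ((hf x hx).sub ((hasDerivAt_id x).mul_const (f' a))).hasDerivWithinAt)
    (fun x hx => by simpa using hlip x hx) left_mem_uIcc right_mem_uIcc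
  calc |f b - f a - (b - a) * f' a| = ‖(f b - b * f' a) - (f a - a * f' a)‖ := by
        rw [Real.norm_eq_abs]; ring_nf
    _ ≤ M * |b - a| * ‖b - a‖ := hmvt
    _ = M * (b - a) ^ 2 := by rw [Real.norm_eq_abs, mul_assoc, abs_mul_abs_self, sq]

lemma rad_eq_norm (p : ℝ × ℝ) : rad p = ‖(p.1 + p.2 * Complex.I : ℂ)‖ :=
  (Complex.norm_add_mul_I _ _).symm

lemma abs_fst_le_rad (p : ℝ × ℝ) : |p.1| ≤ rad p := by
  rw [rad_eq_norm]
  simpa using Complex.abs_re_le_norm (p.1 + p.2 * Complex.I)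

lemma U_eq_sqrt (p : ℝ × ℝ) : U p = √((rad p + p.1) / 2) := by
  set w : ℂ := p.1 + p.2 * Complex.I
  rcases eq_or_ne w 0 with hw | hw
  · have h1 : p.1 = 0 := by simpa [w] using congrArg Complex.re hw
    have h2 : p.2 = 0 := by simpa [w] using congrArg Complex.im hw
    simp [U, rad, h1, h2]
  · have hr : 0 < rad p := by rw [rad_eq_norm]; exact norm_pos_iff.mpr hw
    have hcos : Real.cos (Complex.arg w) = p.1 / rad p := by
      rw [Complex.cos_arg hw, rad_eq_norm]; simp [w]
    rw [U, ← rad, cos_half (Complex.neg_pi_lt_arg w).le (Complex.arg_le_pi w), hcos,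
      ← sqrt_mul hr.le]
    congr 1
    field_simp

lemma U_nonneg (p : ℝ × ℝ) : 0 ≤ U p := by
  rw [U_eq_sqrt]
  exact sqrt_nonneg _

lemma fst_pos_of_snd_eq_zero {p : ℝ × ℝ} (hp : p ∉ Pneg) (hz : p.2 = 0) : 0 < p.1 :=
  lt_of_not_ge fun h => hp ⟨h, hz⟩

lemma rad_eq_fst_of_snd_eq_zero {p : ℝ × ℝ} (hp : p ∉ Pneg) (hz : p.2 = 0) : rad p = p.1 := by
  rw [rad, hz, zero_pow two_ne_zero, add_zero, sqrt_sq (fst_pos_of_snd_eq_zero hp hz).le]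

lemma rad_add_fst_pos {p : ℝ × ℝ} (hp : p ∉ Pneg) : 0 < rad p + p.1 := by
  rcases eq_or_ne p.2 0 with hz | hz
  · linarith [rad_eq_fst_of_snd_eq_zero hp hz, fst_pos_of_snd_eq_zero hp hz]
  · have hlt : |p.1| < rad p := by
      rw [rad, ← sqrt_sq_eq_abs]
      exact sqrt_lt_sqrt (sq_nonneg _) (lt_add_of_pos_right _ (by positivity))
    linarith [neg_abs_le p.1]

lemma rad_pos {p : ℝ × ℝ} (hp : p ∉ Pneg) : 0 < rad p := by
  linarith [rad_add_fst_pos hp, le_abs_self p.1, abs_fst_le_rad p]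

lemma isClosed_Pneg : IsClosed Pneg :=
  (isClosed_le continuous_fst continuous_const).inter (isClosed_eq continuous_snd continuous_const)

lemma hasDerivAt_rad {p : ℝ × ℝ} (hp : 0 < rad p) :
    HasDerivAt (fun t => rad (t, p.2)) (p.1 / rad p) p.1 := by
  have hsq : HasDerivAt (fun t : ℝ => t ^ 2 + p.2 ^ 2) (2 * p.1) p.1 := by
    simpa using (hasDerivAt_pow 2 p.1).add_const (p.2 ^ 2)
  refine (hsq.sqrt (sqrt_pos.mp hp).ne').congr_deriv ?_
  change 2 * p.1 / (2 * rad p) = p.1 / rad p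
  exact mul_div_mul_left _ _ two_ne_zero

lemma hasDerivAt_U {p : ℝ × ℝ} (hp : p ∉ Pneg) :
    HasDerivAt (fun t => U (t, p.2)) (U p / (2 * rad p)) p.1 := by
  have hr := rad_pos hp
  have hh : HasDerivAt (fun t => (rad (t, p.2) + t) / 2) ((p.1 / rad p + 1) / 2) p.1 :=
    ((hasDerivAt_rad hr).add (hasDerivAt_id p.1)).div_const 2
  have hpos : 0 < (rad p + p.1) / 2 := by linarith [rad_add_fst_pos hp]
  have hU : 0 < √((rad p + p.1) / 2) := sqrt_pos.mpr hpos
  simp only [U_eq_sqrt]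
  convert hh.sqrt hpos.ne' using 1
  field_simp
  rw [sq_sqrt hpos.le]
  ring

lemma Ut_eq {p : ℝ × ℝ} (hp : p ∉ Pneg) : Ut p = U p / (2 * rad p) :=
  (hasDerivAt_U hp).deriv

lemma hasDerivAt_Ut {p : ℝ × ℝ} (hp : p ∉ Pneg) :
    HasDerivAt (fun t => Ut (t, p.2)) (U p * (rad p - 2 * p.1) / (4 * rad p ^ 3)) p.1 := by
  have hr := rad_pos hp
  have hoff : ∀ᶠ t in nhds p.1, (t, p.2) ∉ Pneg :=
    (Continuous.prodMk_left p.2).continuousAt.preimage_mem_nhds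
      (isClosed_Pneg.isOpen_compl.mem_nhds hp)
  have heq : (fun t => U (t, p.2) / (2 * rad (t, p.2))) =ᶠ[nhds p.1] fun t => Ut (t, p.2) :=
    hoff.mono fun t ht => (Ut_eq ht).symm
  refine HasDerivAt.congr_of_eventuallyEq ?_ heq.symm
  refine ((hasDerivAt_U hp).div ((hasDerivAt_rad hr).const_mul 2) (by positivity)).congr_deriv ?_
  field_simp
  ring

lemma Utt_eq {p : ℝ × ℝ} (hp : p ∉ Pneg) :
    Utt p = U p * (rad p - 2 * p.1) / (4 * rad p ^ 3) :=
  (hasDerivAt_Ut hp).deriv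

lemma abs_Utt_le {p : ℝ × ℝ} (hp : p ∉ Pneg) : |Utt p| ≤ 3 / 2 / rad p * Ut p := by
  have hr := rad_pos hp
  have hU := U_nonneg p
  have ht := abs_le.mp (abs_fst_le_rad p)
  have hcoef : |rad p - 2 * p.1| ≤ 3 * rad p := abs_le.mpr ⟨by linarith, by linarith⟩
  rw [Utt_eq hp, Ut_eq hp, abs_div, abs_mul, abs_of_nonneg hU,
    abs_of_pos (show 0 < 4 * rad p ^ 3 by positivity),
    div_le_iff₀ (by positivity)]
  calc U p * |rad p - 2 * p.1| ≤ U p * (3 * rad p) := mul_le_mul_of_nonneg_left hcoef hU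
    _ = 3 / 2 / rad p * (U p / (2 * rad p)) * (4 * rad p ^ 3) := by field_simp; ring

lemma abs_rad_sub_rad_le (p : ℝ × ℝ) (x : ℝ) : |rad (x, p.2) - rad p| ≤ |x - p.1| := by
  rw [rad_eq_norm, rad_eq_norm]
  convert abs_norm_sub_norm_le ((x : ℂ) + p.2 * Complex.I) (p.1 + p.2 * Complex.I) using 1
  rw [add_sub_add_right_eq_sub, ← Complex.ofReal_sub, Complex.norm_real, Real.norm_eq_abs]

lemma half_rad_le_rad_of_abs_sub_le {p : ℝ × ℝ} {x : ℝ} (hx : |x - p.1| ≤ rad p / 2) :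
    rad p / 2 ≤ rad (x, p.2) := by
  linarith [(abs_le.mp (abs_rad_sub_rad_le p x)).1]

lemma notMem_Pneg_of_abs_sub_le {p : ℝ × ℝ} (hp : p ∉ Pneg) {x : ℝ}
    (hx : |x - p.1| ≤ rad p / 2) : (x, p.2) ∉ Pneg := by
  rintro ⟨hx0, hz⟩
  linarith [(abs_le.mp hx).1, rad_eq_fst_of_snd_eq_zero hp hz, fst_pos_of_snd_eq_zero hp hz]

lemma Ut_pos {p : ℝ × ℝ} (hp : p ∉ Pneg) : 0 < Ut p := by
  have hr := rad_pos hp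
  have hsum := rad_add_fst_pos hp
  rw [Ut_eq hp, U_eq_sqrt]
  positivity

lemma Ut_le_exp_mul_Ut {p : ℝ × ℝ} (hp : p ∉ Pneg) {x : ℝ} (hx : |x - p.1| ≤ rad p / 2) :
    Ut (x, p.2) ≤ exp (3 / 2) * Ut p := by
  have hr := rad_pos hp
  have hnear : ∀ y ∈ uIcc p.1 x, |y - p.1| ≤ rad p / 2 := fun y hy =>
    (abs_sub_left_of_mem_uIcc hy).trans hx
  have hlog := le_exp_mul_of_abs_deriv_le (K := 3 / rad p)
    (fun y hy => Ut_pos (notMem_Pneg_of_abs_sub_le hp (hnear y hy)))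
    (fun y hy =>
      (hasDerivAt_Ut (notMem_Pneg_of_abs_sub_le hp (hnear y hy))).differentiableAt.hasDerivAt)
    (fun y hy => by
      have hq := notMem_Pneg_of_abs_sub_le hp (hnear y hy)
      have hrq := half_rad_le_rad_of_abs_sub_le (hnear y hy)
      calc |Utt (y, p.2)| ≤ 3 / 2 / rad (y, p.2) * Ut (y, p.2) := abs_Utt_le hq
        _ ≤ 3 / rad p * Ut (y, p.2) := by
          refine mul_le_mul_of_nonneg_right ?_ (Ut_pos hq).le
          rw [div_div]
          exact div_le_div_of_nonneg_left (by norm_num) hr (by linarith))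
  refine hlog.trans (mul_le_mul_of_nonneg_right (exp_le_exp.mpr ?_) (Ut_pos hp).le)
  calc 3 / rad p * |x - p.1| ≤ 3 / rad p * (rad p / 2) := by gcongr
    _ = 3 / 2 := by field_simp

lemma abs_U_add_sub_le {p : ℝ × ℝ} (hp : p ∉ Pneg) {μ : ℝ} (hμ : |μ| ≤ rad p / 2) :
    |U (p.1 + μ, p.2) - U p - μ * Ut p| ≤ 3 * exp (3 / 2) * μ ^ 2 / rad p * Ut p := by
  have hr := rad_pos hp
  have hnear : ∀ y ∈ uIcc p.1 (p.1 + μ), |y - p.1| ≤ rad p / 2 := fun y hy =>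
    (abs_sub_left_of_mem_uIcc hy).trans (by rwa [add_sub_cancel_left])
  have hoff : ∀ y ∈ uIcc p.1 (p.1 + μ), (y, p.2) ∉ Pneg := fun y hy =>
    notMem_Pneg_of_abs_sub_le hp (hnear y hy)
  have htaylor := abs_sub_sub_mul_deriv_le (f := fun t => U (t, p.2))
    (f' := fun t => Ut (t, p.2)) (f'' := fun t => Utt (t, p.2))
    (M := 3 * exp (3 / 2) / rad p * Ut p)
    (fun y hy => (Ut_eq (hoff y hy)).symm ▸ hasDerivAt_U (hoff y hy))
    (fun y hy => (hasDerivAt_Ut (hoff y hy)).differentiableAt.hasDerivAt)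
    (fun y hy => by
      calc |Utt (y, p.2)| ≤ 3 / 2 / rad (y, p.2) * Ut (y, p.2) := abs_Utt_le (hoff y hy)
        _ ≤ 3 / 2 / (rad p / 2) * (exp (3 / 2) * Ut p) := by
          gcongr
          exacts [(Ut_pos (hoff y hy)).le, half_rad_le_rad_of_abs_sub_le (hnear y hy),
            Ut_le_exp_mul_Ut hp (hnear y hy)]
        _ = 3 * exp (3 / 2) / rad p * Ut p := by field_simp)
  simp only [add_sub_cancel_left] at htaylor
  convert htaylor using 1
  ring

/-- `|U_{tt}| ≤ C r⁻¹ U_t` off `P⁻`; consequently, Taylor expansion in `t` gives the two-sided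
estimate `(1 + μ/(2r) ∓ C'μ²/r²) U ≤/≥ U(t+μ,z)` for `|μ| ≤ r/2`. -/
theorem stmt15 :
    ∃ C : ℝ, 0 < C ∧ (∀ p : ℝ × ℝ, p ∉ Pneg → |Utt p| ≤ C / rad p * Ut p) ∧
    ∃ C' : ℝ, 0 < C' ∧ ∀ p : ℝ × ℝ, p ∉ Pneg → ∀ μ : ℝ, |μ| ≤ rad p / 2 →
      |U (p.1 + μ, p.2) - U p - μ * Ut p| ≤ C' * μ ^ 2 / rad p * Ut p ∧
      (1 + μ / (2 * rad p) - C' * μ ^ 2 / (rad p) ^ 2) * U p ≤ U (p.1 + μ, p.2) ∧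
      U (p.1 + μ, p.2) ≤ (1 + μ / (2 * rad p) + C' * μ ^ 2 / (rad p) ^ 2) * U p := by
  refine ⟨3 / 2, by norm_num, fun p hp => abs_Utt_le hp, 3 * exp (3 / 2), by positivity, ?_⟩
  intro p hp μ hμ
  have htaylor := abs_U_add_sub_le hp hμ
  have hr := rad_pos hp
  have hU := U_nonneg p
  have hlin : μ * Ut p = μ / (2 * rad p) * U p := by rw [Ut_eq hp]; ring
  have hquad : 3 * exp (3 / 2) * μ ^ 2 / rad p * Ut p =
      (3 * exp (3 / 2) * μ ^ 2 / rad p ^ 2 * U p) / 2 := by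
    rw [Ut_eq hp]; field_simp
  have hquad_nonneg : 0 ≤ 3 * exp (3 / 2) * μ ^ 2 / rad p ^ 2 * U p := by positivity
  obtain ⟨hlow, hupp⟩ := abs_le.mp htaylor
  exact ⟨htaylor, by linarith, by linarith⟩
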